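/- arXiv:math/0112167 — 6 statements merged into one kernel-verified Lean document; each statement's English description precedes it below -/
import Mathlib

section
/- dim_k (I_W)_{a+b+2} = C(a+b+5, 3) − 6a − 4b − 9, where C(·,·) denotes the binomial coefficient and (I_W)_{a+b+2} is the degree-(a+b+2) graded piece of the ideal I_W = (x³, x²y, xy², y³, x·q, y·q, h). (Equivalently, h⁰(P³, I_W(a+b+2)) = C(a+b+5,3) − 6a − 4b − 9, as asserted in the proof of Proposition 5.2.) -/
/-! In degree `d = a + b + 2` the ideal `I_W` has the explicit basis consisting of the
degree-`d` monomials of `(x, y)³`, the products `x·q·z^s·w^(b-1-s)` and `y·q·z^s·w^(b-1-s)`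
for `s < b`, and `h`: a multiple of `x·q` or `y·q` by a monomial divisible by `x` or `y`
already lies in `(x, y)³`, and `h` is the only generator of degree `d`. Each basis vector
contains a monomial that occurs in no other one, which gives linear independence. Counting,
`(x, y)³` misses `(d + 1) + 2d + 3(d - 1) = 6d - 2` of the `C(d + 3, 3)` monomials of
degree `d`, so `dim (I_W)_d = C(d + 3, 3) - (6d - 2) + 2b + 1`. -/

open MvPolynomial Finset

namespace MvPolynomial
variable {σ R : Type*} [CommSemiring R]

attribute [local instance] gradedAlgebra in
theorem homogeneousComponent_mul_of_isHomogeneous_right {g : MvPolynomial σ R} {e : ℕ}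
    (hg : g.IsHomogeneous e) (c : MvPolynomial σ R) (n : ℕ) :
    homogeneousComponent n (c * g) =
      if e ≤ n then homogeneousComponent (n - e) c * g else 0 := by
  simpa [← decomposition.decompose'_apply] using
    DirectSum.coe_decompose_mul_of_right_mem (𝒜 := homogeneousSubmodule σ R) (a := c) n hg

theorem IsHomogeneous.mul_mem_of_monomial_mul_mem {U : Submodule R (MvPolynomial σ R)}
    {f g : MvPolynomial σ R} {n : ℕ} (hf : f.IsHomogeneous n)
    (hU : ∀ m : σ →₀ ℕ, m.degree = n → monomial m 1 * g ∈ U) : f * g ∈ U := by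
  rw [f.as_sum, Finset.sum_mul]
  refine Submodule.sum_mem _ fun m hm => ?_
  rw [show monomial m (coeff m f) = coeff m f • monomial m 1 by simp [smul_monomial],
    smul_mul_assoc]
  refine Submodule.smul_mem _ _ (hU m ?_)
  rw [Finsupp.degree_eq_weight_one]
  exact hf (mem_support_iff.mp hm)

theorem span_inf_homogeneousSubmodule_le {ι : Type*} [Fintype ι] {g : ι → MvPolynomial σ R}
    {e : ι → ℕ} (hg : ∀ i, (g i).IsHomogeneous (e i)) {d : ℕ}
    {U : Submodule R (MvPolynomial σ R)}
    (hU : ∀ i (m : σ →₀ ℕ), m.degree + e i = d → monomial m 1 * g i ∈ U) :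
    (Ideal.span (Set.range g)).restrictScalars R ⊓ homogeneousSubmodule σ R d ≤ U := by
  rintro p ⟨hp, hpd⟩
  obtain ⟨c, rfl⟩ := Ideal.mem_span_range_iff_exists_fun.mp hp
  rw [← homogeneousComponent_eq_self hpd, map_sum]
  refine Submodule.sum_mem _ fun i _ => ?_
  rw [homogeneousComponent_mul_of_isHomogeneous_right (hg i)]
  split_ifs with hle
  · exact (homogeneousComponent_isHomogeneous _ _).mul_mem_of_monomial_mul_mem
      fun m hm => hU i m (by omega)
  · exact U.zero_mem

end MvPolynomial

theorem LinearIndependent.of_pairwise_dual_eq_zero_ne_zero {ι K M : Type*} [Field K]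
    [AddCommGroup M] [Module K M] (v : ι → M) (f : ι → Module.Dual K M)
    (h1 : Pairwise fun i j ↦ f i (v j) = 0) (h2 : ∀ i, f i (v i) ≠ 0) :
    LinearIndependent K v :=
  .of_pairwise_dual_eq_zero_one v (fun i => (f i (v i))⁻¹ • f i)
    (fun i j hij => by simp [h1 hij]) (fun i => by simp [h2 i])

namespace TripleLine

noncomputable def exps (i j c l : ℕ) : Fin 4 →₀ ℕ :=
  Finsupp.single 0 i + Finsupp.single 1 j + Finsupp.single 2 c + Finsupp.single 3 l

section Exps
variable {i j c l i' j' c' l' : ℕ}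

@[simp] lemma exps_apply_zero : exps i j c l 0 = i := by simp [exps]
@[simp] lemma exps_apply_one : exps i j c l 1 = j := by simp [exps]
@[simp] lemma exps_apply_two : exps i j c l 2 = c := by simp [exps]
@[simp] lemma exps_apply_three : exps i j c l 3 = l := by simp [exps]

lemma degree_eq_sum_four (m : Fin 4 →₀ ℕ) : m.degree = m 0 + m 1 + m 2 + m 3 := by
  rw [Finsupp.degree_eq_sum, Fin.sum_univ_four]

@[simp] lemma exps_eq_iff {m : Fin 4 →₀ ℕ} :
    exps i j c l = m ↔ i = m 0 ∧ j = m 1 ∧ c = m 2 ∧ l = m 3 := by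
  refine ⟨fun h => by simp [← h], fun ⟨h0, h1, h2, h3⟩ => ?_⟩
  ext n
  fin_cases n <;> simp [*]

@[simp] lemma eq_exps_iff {m : Fin 4 →₀ ℕ} :
    m = exps i j c l ↔ m 0 = i ∧ m 1 = j ∧ m 2 = c ∧ m 3 = l := by
  rw [eq_comm, exps_eq_iff]; omega

@[simp] lemma degree_exps : (exps i j c l).degree = i + j + c + l := by
  simp [degree_eq_sum_four]

@[simp] lemma exps_add :
    exps i j c l + exps i' j' c' l' = exps (i + i') (j + j') (c + c') (l + l') := by
  rw [eq_comm, exps_eq_iff]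
  simp

lemma monomial_exps {k : Type*} [CommSemiring k] :
    monomial (exps i j c l) (1 : k) = X 0 ^ i * X 1 ^ j * X 2 ^ c * X 3 ^ l := by
  simp [exps, X_pow_eq_monomial, monomial_mul]

end Exps

def cubeMonomials (d : ℕ) : Finset (Fin 4 →₀ ℕ) :=
  (finsuppAntidiag univ d).filter fun m => 3 ≤ m 0 + m 1

lemma mem_cubeMonomials {d : ℕ} {m : Fin 4 →₀ ℕ} :
    m ∈ cubeMonomials d ↔ m.degree = d ∧ 3 ≤ m 0 + m 1 := by
  simp [cubeMonomials, mem_finsuppAntidiag, Finsupp.degree_eq_sum]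

lemma card_filter_not_cube_fiber {d i j : ℕ} (hij : i + j ≤ 2) :
    #{m ∈ (finsuppAntidiag (univ : Finset (Fin 4)) d).filter (fun m => ¬ 3 ≤ m 0 + m 1) |
      (m 0, m 1) = (i, j)} = d + 1 - i - j := by
  rw [← card_range (d + 1 - i - j)]
  refine card_nbij' (fun m => m 2) (fun c => exps i j c (d - i - j - c)) ?_ ?_ ?_ ?_ <;>
    intro m hm <;> simp_all [mem_finsuppAntidiag, Fin.sum_univ_four] <;> omega

lemma card_filter_not_cube {d : ℕ} (hd : 1 ≤ d) :
    #((finsuppAntidiag (univ : Finset (Fin 4)) d).filter fun m => ¬ 3 ≤ m 0 + m 1) + 2 =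
      6 * d := by
  rw [card_eq_sum_card_fiberwise (f := fun m => (m 0, m 1))
    (t := {(0, 0), (1, 0), (0, 1), (2, 0), (1, 1), (0, 2)})]
  · repeat rw [sum_insert (by simp)]
    simp (disch := omega) only [sum_singleton, card_filter_not_cube_fiber]
    omega
  · intro m hm
    simp at hm ⊢
    omega

lemma card_cubeMonomials {d : ℕ} (hd : 1 ≤ d) :
    #(cubeMonomials d) + 6 * d = (d + 3).choose 3 + 2 := by
  have htotal := card_finsuppAntidiag_nat_eq_choose (s := (univ : Finset (Fin 4))) d
  rw [← card_filter_add_card_filter_not (fun m => 3 ≤ m 0 + m 1), card_univ, Fintype.card_fin,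
    show 4 + d - 1 = d + 3 by omega, Nat.choose_symm_add] at htotal
  have := card_filter_not_cube hd
  rw [cubeMonomials]
  omega

variable (k : Type*) [Field k] (a b : ℕ)

noncomputable def q : MvPolynomial (Fin 4) k := X 0 * X 2 ^ (a + 1) - X 1 * X 3 ^ (a + 1)

noncomputable def h : MvPolynomial (Fin 4) k := X 2 ^ b * q k a - X 0 ^ 2 * X 3 ^ (a + b)

lemma X_zero_mul_q :
    X 0 * q k a = monomial (exps 2 0 (a + 1) 0) 1 - monomial (exps 1 1 0 (a + 1)) 1 := by
  simp only [monomial_exps, q]; ring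

lemma X_one_mul_q :
    X 1 * q k a = monomial (exps 1 1 (a + 1) 0) 1 - monomial (exps 0 2 0 (a + 1)) 1 := by
  simp only [monomial_exps, q]; ring

lemma h_eq : h k a b = monomial (exps 1 0 (b + (a + 1)) 0) 1 - monomial (exps 0 1 b (a + 1)) 1
      - monomial (exps 2 0 0 (a + b)) 1 := by
  simp only [monomial_exps, h, q]; ring

noncomputable def gens : Fin 7 → MvPolynomial (Fin 4) k :=
  ![monomial (exps 3 0 0 0) 1, monomial (exps 2 1 0 0) 1, monomial (exps 1 2 0 0) 1,
    monomial (exps 0 3 0 0) 1, X 0 * q k a, X 1 * q k a, h k a b]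

def gensDeg : Fin 7 → ℕ := ![3, 3, 3, 3, a + 3, a + 3, a + b + 2]

lemma isHomogeneous_gens (i : Fin 7) : (gens k a b i).IsHomogeneous (gensDeg a b i) := by
  fin_cases i <;> simp only [gens, gensDeg, X_zero_mul_q, X_one_mul_q, h_eq] <;>
    apply_rules [IsHomogeneous.sub, isHomogeneous_monomial] <;> simp <;> omega

abbrev BasisIdx : Type := cubeMonomials (a + b + 2) ⊕ (Fin b ⊕ Fin b ⊕ Unit)

noncomputable def basisVec : BasisIdx a b → MvPolynomial (Fin 4) k
  | .inl τ => monomial τ 1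
  | .inr (.inl s) => monomial (exps 0 0 s (b - 1 - s)) 1 * (X 0 * q k a)
  | .inr (.inr (.inl s)) => monomial (exps 0 0 s (b - 1 - s)) 1 * (X 1 * q k a)
  | .inr (.inr (.inr _)) => h k a b

/-- A monomial occurring in `basisVec i` and in no other `basisVec j`. -/
noncomputable def witness : BasisIdx a b → Fin 4 →₀ ℕ
  | .inl τ => τ
  | .inr (.inl s) => exps 2 0 (s + (a + 1)) (b - 1 - s)
  | .inr (.inr (.inl s)) => exps 0 2 s (b - 1 - s + (a + 1))
  | .inr (.inr (.inr _)) => exps 1 0 (b + (a + 1)) 0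

lemma coeff_witness_basisVec_ne_zero (i : BasisIdx a b) :
    coeff (witness a b i) (basisVec k a b i) ≠ 0 := by
  rcases i with τ | s | s | _ <;>
    simp [witness, basisVec, X_zero_mul_q, X_one_mul_q, h_eq, mul_sub, monomial_mul,
      coeff_monomial]

lemma coeff_witness_basisVec_eq_zero {i j : BasisIdx a b} (hij : i ≠ j) :
    coeff (witness a b i) (basisVec k a b j) = 0 := by
  rcases i with ⟨τ, hτ⟩ | s | s | _ <;> rcases j with ⟨τ', hτ'⟩ | s' | s' | _ <;>
    simp_all [witness, basisVec, X_zero_mul_q, X_one_mul_q, h_eq, mul_sub, monomial_mul,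
      coeff_monomial, Fin.ext_iff, Ne.symm] <;>
    simp only [mem_cubeMonomials] at * <;> (try split_ifs) <;> first | omega | simp

lemma linearIndependent_basisVec : LinearIndependent k (basisVec k a b) :=
  .of_pairwise_dual_eq_zero_ne_zero _ (fun i => lcoeff k (witness a b i))
    (fun _ _ hij => coeff_witness_basisVec_eq_zero k a b hij)
    (coeff_witness_basisVec_ne_zero k a b)

lemma monomial_mem_ideal_span_gens {m : Fin 4 →₀ ℕ} (hm : 3 ≤ m 0 + m 1) :
    monomial m 1 ∈ Ideal.span (Set.range (gens k a b)) := by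
  refine Ideal.span_mono (s := (monomial · 1) ''
    {exps 3 0 0 0, exps 2 1 0 0, exps 1 2 0 0, exps 0 3 0 0}) ?_
    (mem_ideal_span_monomial_image.2 ?_)
  · rintro _ ⟨μ, hμ, rfl⟩
    rcases hμ with rfl | rfl | rfl | rfl
    exacts [⟨0, rfl⟩, ⟨1, rfl⟩, ⟨2, rfl⟩, ⟨3, rfl⟩]
  · intro μ hμ
    rw [mem_singleton.1 (support_monomial_subset hμ)]
    simp only [Set.mem_insert_iff, Set.mem_singleton_iff, exists_eq_or_imp, exists_eq_left,
      Finsupp.le_def, Fin.forall_fin_succ]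
    simp
    omega

lemma basisVec_mem_ideal_span_gens (i : BasisIdx a b) :
    basisVec k a b i ∈ Ideal.span (Set.range (gens k a b)) := by
  rcases i with ⟨τ, hτ⟩ | s | s | _
  · exact monomial_mem_ideal_span_gens k a b (mem_cubeMonomials.1 hτ).2
  · exact Ideal.mul_mem_left _ _ (Ideal.subset_span ⟨4, rfl⟩)
  · exact Ideal.mul_mem_left _ _ (Ideal.subset_span ⟨5, rfl⟩)
  · exact Ideal.subset_span ⟨6, rfl⟩

lemma isHomogeneous_basisVec (i : BasisIdx a b) :
    (basisVec k a b i).IsHomogeneous (a + b + 2) := by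
  rcases i with ⟨τ, hτ⟩ | ⟨s, hs⟩ | ⟨s, hs⟩ | _
  · exact isHomogeneous_monomial _ (mem_cubeMonomials.1 hτ).1
  · convert (isHomogeneous_monomial (1 : k) (degree_exps (i := 0) (j := 0) (c := s)
      (l := b - 1 - s))).mul (isHomogeneous_gens k a b 4) using 1
    · rfl
    · simp [gensDeg]; omega
  · convert (isHomogeneous_monomial (1 : k) (degree_exps (i := 0) (j := 0) (c := s)
      (l := b - 1 - s))).mul (isHomogeneous_gens k a b 5) using 1
    · rfl
    · simp [gensDeg]; omega
  · exact isHomogeneous_gens k a b 6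

lemma monomial_mem_span_basisVec {m : Fin 4 →₀ ℕ} (hdeg : m.degree = a + b + 2)
    (hxy : 3 ≤ m 0 + m 1) : monomial m 1 ∈ Submodule.span k (Set.range (basisVec k a b)) :=
  Submodule.subset_span ⟨.inl ⟨m, mem_cubeMonomials.2 ⟨hdeg, hxy⟩⟩, rfl⟩

lemma monomial_mul_sub_mem_span_basisVec {m μ ν : Fin 4 →₀ ℕ} (hμ : μ 0 + μ 1 = 2)
    (hν : ν 0 + ν 1 = 2) (hμdeg : μ.degree = a + 3) (hνdeg : ν.degree = a + 3)
    (hm : m.degree + (a + 3) = a + b + 2) (hxy : m 0 + m 1 ≠ 0) :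
    monomial m 1 * (monomial μ 1 - monomial ν 1) ∈
      Submodule.span k (Set.range (basisVec k a b)) := by
  rw [mul_sub, monomial_mul, monomial_mul, one_mul]
  refine sub_mem (monomial_mem_span_basisVec k a b ?_ ?_) (monomial_mem_span_basisVec k a b ?_ ?_)
  all_goals simp only [map_add, Finsupp.add_apply]; omega

lemma exists_eq_exps_of_xy_eq_zero {m : Fin 4 →₀ ℕ} (hxy : m 0 + m 1 = 0)
    (hm : m.degree + (a + 3) = a + b + 2) : ∃ s : Fin b, m = exps 0 0 s (b - 1 - s) := by
  rw [degree_eq_sum_four] at hm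
  exact ⟨⟨m 2, by omega⟩, by simp; omega⟩

lemma monomial_mul_gens_mem_span_basisVec (i : Fin 7) (m : Fin 4 →₀ ℕ)
    (hm : m.degree + gensDeg a b i = a + b + 2) :
    monomial m 1 * gens k a b i ∈ Submodule.span k (Set.range (basisVec k a b)) := by
  fin_cases i <;> simp only [gens, gensDeg, Fin.reduceFinMk, Matrix.cons_val] at hm ⊢
  iterate 4
    · rw [monomial_mul, one_mul]
      refine monomial_mem_span_basisVec k a b ?_ ?_
      · simpa [map_add, add_assoc] using hm
      · simp only [Finsupp.add_apply, exps_apply_zero, exps_apply_one]; omega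
  · by_cases hxy : m 0 + m 1 = 0
    · obtain ⟨s, rfl⟩ := exists_eq_exps_of_xy_eq_zero a b hxy hm
      exact Submodule.subset_span ⟨.inr (.inl s), rfl⟩
    · rw [X_zero_mul_q]
      exact monomial_mul_sub_mem_span_basisVec k a b (by simp) (by simp) (by simp; omega)
        (by simp; omega) hm hxy
  · by_cases hxy : m 0 + m 1 = 0
    · obtain ⟨s, rfl⟩ := exists_eq_exps_of_xy_eq_zero a b hxy hm
      exact Submodule.subset_span ⟨.inr (.inr (.inl s)), rfl⟩
    · rw [X_one_mul_q]
      exact monomial_mul_sub_mem_span_basisVec k a b (by simp) (by simp) (by simp; omega)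
        (by simp; omega) hm hxy
  · obtain rfl : m = 0 := (Finsupp.degree_eq_zero_iff m).1 (by omega)
    rw [← C_apply, C_1, one_mul]
    exact Submodule.subset_span ⟨.inr (.inr (.inr ())), rfl⟩

lemma ideal_span_gens_inf_homogeneousSubmodule :
    (Ideal.span (Set.range (gens k a b))).restrictScalars k ⊓
      homogeneousSubmodule (Fin 4) k (a + b + 2) =
      Submodule.span k (Set.range (basisVec k a b)) :=
  le_antisymm
    (span_inf_homogeneousSubmodule_le (isHomogeneous_gens k a b)
      (monomial_mul_gens_mem_span_basisVec k a b))
    (Submodule.span_le.2 <| Set.range_subset_iff.2 fun i =>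
      ⟨basisVec_mem_ideal_span_gens k a b i, isHomogeneous_basisVec k a b i⟩)

lemma finrank_ideal_span_gens_inf_homogeneousSubmodule :
    Module.finrank k ↥((Ideal.span (Set.range (gens k a b))).restrictScalars k ⊓
      homogeneousSubmodule (Fin 4) k (a + b + 2)) =
      #(cubeMonomials (a + b + 2)) + (b + (b + 1)) := by
  rw [ideal_span_gens_inf_homogeneousSubmodule,
    finrank_span_eq_card (linearIndependent_basisVec k a b)]
  simp [Fintype.card_sum]

end TripleLine

/-- **Dimension count from the proof of Proposition 5.2.** Let `S = k[x,y,z,w]`,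
`a, b ≥ 0`, `q = x·z^{a+1} − y·w^{a+1}` and `h = z^b·q − x²·w^{a+b}`.  Let
`I_W = (x³, x²y, xy², y³, x·q, y·q, h)` be the saturated ideal of the explicit
quasiprimitive triple line `W` of type `(a,b)`.  Then the degree-`(a+b+2)`
graded piece of `I_W` has dimension `C(a+b+5,3) − 6a − 4b − 9`. -/
theorem stmt3 (k : Type*) [Field k] (a b : ℕ)
    (x y z w : MvPolynomial (Fin 4) k)
    (hx : x = X 0) (hy : y = X 1) (hz : z = X 2) (hw : w = X 3)
    (q h : MvPolynomial (Fin 4) k)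
    (hq : q = x * z ^ (a + 1) - y * w ^ (a + 1))
    (hh : h = z ^ b * q - x ^ 2 * w ^ (a + b))
    (IW : Ideal (MvPolynomial (Fin 4) k))
    (hIW : IW = Ideal.span {x ^ 3, x ^ 2 * y, x * y ^ 2, y ^ 3, x * q, y * q, h}) :
    (Module.finrank k
        ↥(IW.restrictScalars k ⊓ homogeneousSubmodule (Fin 4) k (a + b + 2)) : ℤ) =
      (Nat.choose (a + b + 5) 3 : ℤ) - 6 * a - 4 * b - 9 := by
  subst hIW hh hq hx hy hz hw
  have hgens : ({X 0 ^ 3, X 0 ^ 2 * X 1, X 0 * X 1 ^ 2, X 1 ^ 3,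
      X 0 * (X 0 * X 2 ^ (a + 1) - X 1 * X 3 ^ (a + 1)),
      X 1 * (X 0 * X 2 ^ (a + 1) - X 1 * X 3 ^ (a + 1)),
      X 2 ^ b * (X 0 * X 2 ^ (a + 1) - X 1 * X 3 ^ (a + 1)) - X 0 ^ 2 * X 3 ^ (a + b)} :
        Set (MvPolynomial (Fin 4) k)) = Set.range (TripleLine.gens k a b) := by
    simp only [TripleLine.gens, Matrix.range_cons, Matrix.range_empty, Set.union_empty,
      Set.singleton_union, TripleLine.monomial_exps, TripleLine.q, TripleLine.h, pow_zero,
      pow_one, mul_one, one_mul]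
  rw [hgens, TripleLine.finrank_ideal_span_gens_inf_homogeneousSubmodule]
  have hcard := TripleLine.card_cubeMonomials (d := a + b + 2) (by omega)
  rw [show a + b + 2 + 3 = a + b + 5 by omega] at hcard
  omega
end

section
/- The cokernel of ψ : R → R², ψ(1) = (t·w^b, z^{3a+b+2}), is flat as a k[t]-module (equivalently, since k[t] is a principal ideal domain, coker(ψ) has no k[t]-torsion). -/
/-!
Write `v = (t w^b, z^n)` with `n = 3a + b + 2`. If `C p • m = r • v` for a nonzero
`p ∈ k[t]`, then `C p` divides `r z^n`; since `z^n` is a monomial with coefficient `1`,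
`C p` divides `r`, and cancelling `C p` in the torsion-free `R`-module `R²` gives `m ∈ R v`.
So `R² / R v` has no `k[t]`-torsion, and torsion-free modules over the Dedekind domain
`k[t]` are flat.
-/

open MvPolynomial

theorem MvPolynomial.C_dvd_of_C_dvd_mul_monomial_one {R σ : Type*} [CommSemiring R]
    {p : R} {r : MvPolynomial σ R} {s : σ →₀ ℕ} (h : C p ∣ r * monomial s 1) :
    C p ∣ r := by
  rw [C_dvd_iff_dvd_coeff] at h ⊢
  intro d
  simpa only [coeff_mul_monomial, mul_one] using h (d + s)

theorem Submodule.mem_span_singleton_of_smul_mem {S M : Type*} [CommRing S] [AddCommGroup M]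
    [Module S M] {c : S} (hc : IsSMulRegular M c) (φ : M →ₗ[S] S) {v m : M}
    (hv : ∀ r : S, c ∣ r * φ v → c ∣ r) (h : c • m ∈ span S {v}) :
    m ∈ span S {v} := by
  obtain ⟨r, hr⟩ := mem_span_singleton.mp h
  obtain ⟨s, rfl⟩ : c ∣ r :=
    hv r ⟨φ m, by rw [← smul_eq_mul, ← map_smul, hr, map_smul, smul_eq_mul]⟩
  exact mem_span_singleton.mpr ⟨s, hc (by simp only [← hr, mul_smul])⟩

theorem Submodule.isTorsionFree_quotient_of_smul_mem {A S M : Type*} [CommRing A] [IsDomain A]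
    [Ring S] [AddCommGroup M] [Module S M] [Module A M] [SMul A S] [IsScalarTower A S M]
    {N : Submodule S M} (h : ∀ p : A, p ≠ 0 → ∀ m : M, p • m ∈ N → m ∈ N) :
    Module.IsTorsionFree A (M ⧸ N) := by
  refine .of_smul_eq_zero fun p x hpx => or_iff_not_imp_left.mpr fun hp => ?_
  obtain ⟨m, rfl⟩ := Submodule.Quotient.mk_surjective N x
  rw [← Submodule.Quotient.mk_smul] at hpx
  rw [Submodule.Quotient.mk_eq_zero] at hpx ⊢
  exact h p hp m hpx

/-- **Flatness step in the proof of Proposition 2.3.** Let `A = k[t]` and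
`R = k[t,z,w]` (realized as `MvPolynomial (Fin 2) A` with `z = X 0`, `w = X 1`
and `t` the image of `Polynomial.X` under the structure map).  Let
`ψ : R → R²` be the `R`-linear map `1 ↦ (t·w^b, z^{3a+b+2})`, whose image is
the cyclic submodule `N` spanned by that pair.  Then `coker ψ = R²/N` is flat
as a `k[t]`-module; equivalently (since `k[t]` is a PID) it has no
`k[t]`-torsion. -/
theorem stmt4 (k : Type*) [Field k] (a b : ℕ)
    (z w t : MvPolynomial (Fin 2) (Polynomial k))
    (hz : z = X 0) (hw : w = X 1) (ht : t = C Polynomial.X)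
    (N : Submodule (MvPolynomial (Fin 2) (Polynomial k))
      (MvPolynomial (Fin 2) (Polynomial k) × MvPolynomial (Fin 2) (Polynomial k)))
    (hN : N = Submodule.span (MvPolynomial (Fin 2) (Polynomial k))
      {(t * w ^ b, z ^ (3 * a + b + 2))}) :
    Module.Flat (Polynomial k)
      ((MvPolynomial (Fin 2) (Polynomial k) × MvPolynomial (Fin 2) (Polynomial k)) ⧸ N) ∧
    ∀ p : Polynomial k, p ≠ 0 →
      ∀ m : MvPolynomial (Fin 2) (Polynomial k) × MvPolynomial (Fin 2) (Polynomial k),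
        (C p : MvPolynomial (Fin 2) (Polynomial k)) • m ∈ N → m ∈ N := by
  subst hz hw ht
  have torsionFree : ∀ p : Polynomial k, p ≠ 0 → ∀ m,
      (C p : MvPolynomial (Fin 2) (Polynomial k)) • m ∈ N → m ∈ N := by
    intro p hp m
    rw [hN]
    refine Submodule.mem_span_singleton_of_smul_mem (.of_ne_zero (C_ne_zero.mpr hp))
      (LinearMap.snd _ _ _) fun r hr => C_dvd_of_C_dvd_mul_monomial_one
        (by simpa only [LinearMap.snd_apply, X_pow_eq_monomial] using hr)
  have : Module.IsTorsionFree (Polynomial k) (_ ⧸ N) :=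
    Submodule.isTorsionFree_quotient_of_smul_mem fun p hp m hm =>
      torsionFree p hp m (by rwa [← algebraMap_eq, algebraMap_smul])
  exact ⟨inferInstance, torsionFree⟩
end

section
/- The elements x³, y³ and z^{3a+b+2} of R belong to the ideal I₃(M₃) generated by the 3×3 minors of the 9×3 matrix M₃; in particular I₃(M₃) contains the regular sequence (x³, y³, z^{3a+b+2}). -/
open MvPolynomial Matrix

noncomputable section

/-- `R = k[t,x,y,z,w]`. -/
abbrev RR (k : Type*) [Field k] := MvPolynomial (Fin 5) k

variable (k : Type*) [Field k] (a b : ℕ)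

/-- `t`. -/
def vt : RR k := X 0
/-- `x`. -/
def vx : RR k := X 1
/-- `y`. -/
def vy : RR k := X 2
/-- `z`. -/
def vz : RR k := X 3
/-- `w`. -/
def vw : RR k := X 4
/-- `f = z^{a+1}`. -/
def pf : RR k := vz k ^ (a + 1)
/-- `g = w^{a+1}`. -/
def pg : RR k := vw k ^ (a + 1)

/-- The 9×3 matrix `M₃`. -/
def M3 : Matrix (Fin 9) (Fin 3) (RR k) :=
  !![pg k a, 0, vz k ^ (a + b);
     -pf k a, pg k a, 0;
     0, -pf k a, 0;
     vy k, 0, 0;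
     -vx k, vy k, 0;
     0, -vx k, 0;
     0, vy k, -(vt k * vw k ^ b);
     0, 0, -vy k;
     0, 0, vx k]

/-- `I₃(M₃)`: the ideal generated by the 3×3 minors of `M₃`, i.e. by the
determinants of all submatrices obtained by selecting three rows. -/
def I3M3 : Ideal (RR k) :=
  Ideal.span {d : RR k | ∃ r : Fin 3 → Fin 9, Function.Injective r ∧
    d = ((M3 k a b).submatrix r id).det}

/-! Each of `x³`, `y³`, `z^{3a+b+2}` is, up to sign, a 3×3 minor of `M₃` that is triangular after
permuting its rows. They are powers of distinct variables, and multiplication by a monomial `u` is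
injective modulo any ideal spanned by monomials whose supports avoid that of `u`; this makes them a
regular sequence. -/

namespace MvPolynomial

variable {σ R : Type*}

theorem mem_span_monomial_image_of_monomial_mul_mem [CommSemiring R] {S : Set (σ →₀ ℕ)}
    {u : σ →₀ ℕ} (hu : ∀ s ∈ S, Disjoint s.support u.support) {p : MvPolynomial σ R}
    (h : monomial u 1 * p ∈ Ideal.span ((fun s => monomial s (1 : R)) '' S)) :
    p ∈ Ideal.span ((fun s => monomial s (1 : R)) '' S) := by
  rw [mem_ideal_span_monomial_image] at h ⊢
  intro m hm
  have hum : u + m ∈ (monomial u (1 : R) * p).support := by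
    rwa [mem_support_iff, coeff_monomial_mul, one_mul, ← mem_support_iff]
  obtain ⟨s, hs, hle⟩ := h (u + m) hum
  refine ⟨s, hs, fun j => ?_⟩
  by_cases hj : j ∈ s.support
  · have hu0 : u j = 0 := Finsupp.notMem_support_iff.mp (Finset.disjoint_left.mp (hu s hs) hj)
    simpa [hu0] using hle j
  · simp [Finsupp.notMem_support_iff.mp hj]

theorem ofList_map_monomial [CommSemiring R] (l : List (σ →₀ ℕ)) :
    Ideal.ofList (l.map fun s => monomial s (1 : R)) =
      Ideal.span ((fun s => monomial s (1 : R)) '' {s | s ∈ l}) := by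
  unfold Ideal.ofList
  congr 1
  ext
  simp

theorem isRegular_map_monomial [CommRing R] [Nontrivial R] {l : List (σ →₀ ℕ)}
    (hdisj : l.Pairwise fun s t => Disjoint s.support t.support) (hne : ∀ s ∈ l, s ≠ 0) :
    RingTheory.Sequence.IsRegular (MvPolynomial σ R) (l.map fun s => monomial s (1 : R)) := by
  refine ⟨⟨fun i hi => ?_⟩, fun htop => ?_⟩
  · rw [isSMulRegular_quotient_iff_mem_of_smul_mem, smul_eq_mul, Ideal.mul_top, ← List.map_take,
      ofList_map_monomial]
    intro p hp
    refine mem_span_monomial_image_of_monomial_mul_mem (fun s hs => ?_) (by simpa using hp)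
    obtain ⟨j, hj, rfl⟩ := List.getElem_of_mem hs
    rw [List.length_take, lt_min_iff] at hj
    rw [List.length_map] at hi
    rw [List.getElem_take]
    exact List.pairwise_iff_getElem.mp hdisj j i hj.2 hi hj.1
  · rw [smul_eq_mul, Ideal.mul_top, ofList_map_monomial, eq_comm, Ideal.eq_top_iff_one,
      mem_ideal_span_monomial_image] at htop
    obtain ⟨s, hs, hle⟩ := htop 0 (by simp)
    exact hne s hs (le_bot_iff.mp hle)

end MvPolynomial

section

variable {k : Type*} [Field k] {a b : ℕ}

theorem det_submatrix_mem_I3M3 {r : Fin 3 → Fin 9} (hr : Function.Injective r) :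
    ((M3 k a b).submatrix r id).det ∈ I3M3 k a b :=
  Ideal.subset_span ⟨r, hr, rfl⟩

theorem vx_pow_three_mem_I3M3 : vx k ^ 3 ∈ I3M3 k a b := by
  convert det_submatrix_mem_I3M3 (r := ![4, 5, 8]) (by decide) using 1
  rw [det_fin_three]
  simp only [M3, submatrix_apply, id_eq, of_apply, cons_val', cons_val_fin_one, cons_val,
    cons_val_zero, cons_val_one]
  ring

theorem vy_pow_three_mem_I3M3 : vy k ^ 3 ∈ I3M3 k a b := by
  convert det_submatrix_mem_I3M3 (r := ![4, 3, 7]) (by decide) using 1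
  rw [det_fin_three]
  simp only [M3, submatrix_apply, id_eq, of_apply, cons_val', cons_val_fin_one, cons_val,
    cons_val_zero, cons_val_one]
  ring

theorem vz_pow_mem_I3M3 : vz k ^ (3 * a + b + 2) ∈ I3M3 k a b := by
  convert det_submatrix_mem_I3M3 (r := ![0, 1, 2]) (by decide) using 1
  rw [det_fin_three]
  simp only [M3, pf, submatrix_apply, id_eq, of_apply, cons_val', cons_val_fin_one, cons_val,
    cons_val_zero, cons_val_one]
  ring

end

/-- **Buchsbaum–Eisenbud verification, first half (proof of Proposition 2.3).**
The ideal `I₃(M₃)` of 3×3 minors of `M₃` contains the regular sequence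
`(x³, y³, z^{3a+b+2})`. -/
theorem stmt6 :
    vx k ^ 3 ∈ I3M3 k a b ∧ vy k ^ 3 ∈ I3M3 k a b ∧
    vz k ^ (3 * a + b + 2) ∈ I3M3 k a b ∧
    RingTheory.Sequence.IsRegular (RR k) [vx k ^ 3, vy k ^ 3, vz k ^ (3 * a + b + 2)] := by
  refine ⟨vx_pow_three_mem_I3M3, vy_pow_three_mem_I3M3, vz_pow_mem_I3M3, ?_⟩
  have hmon : [vx k ^ 3, vy k ^ 3, vz k ^ (3 * a + b + 2)] =
      [Finsupp.single 1 3, Finsupp.single 2 3, Finsupp.single 3 (3 * a + b + 2)].map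
        fun s => monomial s 1 := by
    simp [vx, vy, vz, X_pow_eq_monomial]
  rw [hmon]
  exact isRegular_map_monomial (by simp) (by simp)

end
end

section
/- The elements x⁶ and y⁶ of R belong to the ideal I₆(M₂) generated by the 6×6 minors of the 7×9 matrix M₂; in particular I₆(M₂) contains the regular sequence (x⁶, y⁶). -/
open MvPolynomial Matrix

noncomputable section

variable (k : Type*) [Field k] (a b : ℕ)

/-- The 7×9 matrix `M₂`. -/
def M2 : Matrix (Fin 7) (Fin 9) (RR k) :=
  !![vy k, 0, 0, -pg k a, 0, 0, 0, vz k ^ (a + b), 0;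
     -vx k, vy k, 0, pf k a, -pg k a, 0, 0, 0, vz k ^ (a + b);
     0, -vx k, vy k, 0, pf k a, -pg k a, 0, 0, 0;
     0, 0, -vx k, 0, 0, pf k a, 0, 0, 0;
     0, 0, 0, vx k, vy k, 0, -vy k, vt k * vw k ^ b, 0;
     0, 0, 0, 0, 0, vy k, vx k, 0, vt k * vw k ^ b;
     0, 0, 0, 0, 0, 0, 0, -vx k, -vy k]

/-- `I₆(M₂)`: the ideal generated by the 6×6 minors of `M₂`, i.e. by the
determinants of all submatrices obtained by selecting six rows and six
columns. -/
def I6M2 : Ideal (RR k) :=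
  Ideal.span {d : RR k | ∃ (r : Fin 6 → Fin 7) (c : Fin 6 → Fin 9),
    Function.Injective r ∧ Function.Injective c ∧
    d = ((M2 k a b).submatrix r c).det}

/-!
Up to sign, `x⁶` and `y⁶` are upper triangular 6×6 minors of `M₂`. Since `x` is prime in `R` and
does not divide `y`, `x⁶` is a nonzerodivisor and `y⁶` is a nonzerodivisor modulo `x⁶`; both vanish
at the origin, so they generate a proper ideal.
-/

open RingTheory.Sequence Pointwise

theorem Submodule.mem_smul_top_self_iff {R : Type*} [CommRing R] (r u : R) :
    u ∈ r • (⊤ : Submodule R R) ↔ r ∣ u := by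
  rw [← Submodule.ideal_span_singleton_smul, smul_eq_mul, Ideal.mul_top,
    Ideal.mem_span_singleton]

theorem RingTheory.Sequence.isRegular_pair {R : Type*} [CommRing R] {r s : R}
    (hr : IsSMulRegular R r) (hs : ∀ u, r ∣ s * u → r ∣ u) (hrs : Ideal.span {r, s} ≠ ⊤) :
    IsRegular R [r, s] := by
  refine (isRegular_iff _ _).mpr ⟨?_, ?_⟩
  · rw [isWeaklyRegular_cons_iff, isWeaklyRegular_singleton_iff,
      isSMulRegular_quotient_iff_mem_of_smul_mem]
    simpa only [Submodule.mem_smul_top_self_iff] using ⟨hr, hs⟩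
  · rw [smul_eq_mul, Ideal.mul_top, Ideal.ofList_cons, Ideal.ofList_singleton,
      ← Ideal.span_insert]
    exact hrs.symm

theorem RingTheory.Sequence.isRegular_pow_pair_of_prime {R : Type*} [CommRing R] [IsDomain R]
    {p q : R} (hp : Prime p) (hpq : ¬p ∣ q) (m n : ℕ) (hI : Ideal.span {p ^ m, q ^ n} ≠ ⊤) :
    IsRegular R [p ^ m, q ^ n] :=
  isRegular_pair (.of_ne_zero (pow_ne_zero m hp.ne_zero))
    (fun _ ↦ hp.pow_dvd_of_dvd_mul_left m fun h ↦ hpq (hp.dvd_of_dvd_pow h)) hI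

theorem MvPolynomial.span_X_pow_pair_ne_top {σ R : Type*} [CommRing R] [Nontrivial R] (i j : σ)
    {m n : ℕ} (hm : m ≠ 0) (hn : n ≠ 0) :
    Ideal.span {(X i : MvPolynomial σ R) ^ m, X j ^ n} ≠ ⊤ := by
  intro h
  obtain ⟨u, v, huv⟩ := Ideal.mem_span_pair.mp (h ▸ Submodule.mem_top (x := 1))
  simpa [hm, hn] using congrArg (eval 0) huv

theorem det_submatrix_mem_I6M2 {r : Fin 6 → Fin 7} {c : Fin 6 → Fin 9}
    (hr : Function.Injective r) (hc : Function.Injective c) :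
    ((M2 k a b).submatrix r c).det ∈ I6M2 k a b :=
  Ideal.subset_span ⟨r, c, hr, hc, rfl⟩

theorem det_M2_minor_eq_vx_pow :
    ((M2 k a b).submatrix ![1, 2, 3, 4, 5, 6] ![0, 1, 2, 3, 6, 7]).det = vx k ^ 6 := by
  have ht : ((M2 k a b).submatrix ![1, 2, 3, 4, 5, 6] ![0, 1, 2, 3, 6, 7]).IsUpperTriangular := by
    intro i j hij
    fin_cases i <;> fin_cases j <;> first | rfl | exact absurd hij (by decide)
  rw [det_of_isUpperTriangular ht, Fin.prod_univ_six]
  change -vx k * -vx k * -vx k * vx k * vx k * -vx k = vx k ^ 6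
  ring

theorem det_M2_minor_eq_neg_vy_pow :
    ((M2 k a b).submatrix ![2, 1, 0, 4, 5, 6] ![2, 1, 0, 4, 5, 8]).det = -vy k ^ 6 := by
  have ht : ((M2 k a b).submatrix ![2, 1, 0, 4, 5, 6] ![2, 1, 0, 4, 5, 8]).IsUpperTriangular := by
    intro i j hij
    fin_cases i <;> fin_cases j <;> first | rfl | exact absurd hij (by decide)
  rw [det_of_isUpperTriangular ht, Fin.prod_univ_six]
  change vy k * vy k * vy k * vy k * vy k * -vy k = -vy k ^ 6
  ring

/-- **Buchsbaum–Eisenbud verification, second half (proof of Proposition 2.3).**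
The ideal `I₆(M₂)` of 6×6 minors of `M₂` contains the regular sequence
`(x⁶, y⁶)`. -/
theorem stmt7 :
    vx k ^ 6 ∈ I6M2 k a b ∧ vy k ^ 6 ∈ I6M2 k a b ∧
    RingTheory.Sequence.IsRegular (RR k) [vx k ^ 6, vy k ^ 6] := by
  refine ⟨?_, ?_, ?_⟩
  · rw [← det_M2_minor_eq_vx_pow k a b]
    exact det_submatrix_mem_I6M2 k a b (by decide) (by decide)
  · rw [← neg_mem_iff, ← det_M2_minor_eq_neg_vy_pow k a b]
    exact det_submatrix_mem_I6M2 k a b (by decide) (by decide)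
  · have hx : Prime (vx k) := X_prime
    have hxy : ¬vx k ∣ vy k := by simp [vx, vy, X_dvd_X]
    exact isRegular_pow_pair_of_prime hx hxy 6 6
      (span_X_pow_pair_ne_top 1 2 (by decide) (by decide))

end
end

section
/- Let M = S/(a, l·f), let J ⊆ M be the S-submodule generated by the class of l, and let M₁ ⊆ J be the S-submodule generated by the classes of l·b and l·c. Then the quotient J/M₁ is isomorphic, as an S-module, to S/(a, b, c). In particular S/(a, b, c) is a subquotient of S/(a, l·f). -/
/-!
`J` is cyclic, generated by the class of `l`, so `J / M₁ ≅ S / (M₁ : l)`. Lifting to `S`,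
`s · l ∈ M₁` means `s l ∈ (a, l f, l b, l c) = (a) + l (b, c)` (as `f ∈ (b, c)`), and since `l` is
regular modulo `a` this happens exactly when `s ∈ (a) + (b, c) = (a, b, c)`.
-/

namespace Submodule

variable {R M : Type*} [CommRing R] [AddCommGroup M] [Module R M]

noncomputable def quotColonEquivSpanSingletonQuot (N : Submodule R M) (x : M) :
    (R ⧸ N.colon {x}) ≃ₗ[R] (R ∙ x) ⧸ N.comap (R ∙ x).subtype :=
  let f : R →ₗ[R] (R ∙ x) ⧸ N.comap (R ∙ x).subtype :=
    (N.comap (R ∙ x).subtype).mkQ ∘ₗ (LinearMap.toSpanSingleton R M x).codRestrict (R ∙ x)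
      (fun r => smul_mem _ r (mem_span_singleton_self x))
  have hf : Function.Surjective f := by
    rintro ⟨y, hy⟩
    obtain ⟨r, rfl⟩ := mem_span_singleton.mp hy
    exact ⟨r, rfl⟩
  have hker : LinearMap.ker f = N.colon {x} := by
    ext r
    simp only [f, LinearMap.mem_ker, LinearMap.coe_comp, Function.comp_apply, mkQ_apply,
      Quotient.mk_eq_zero, mem_comap, subtype_apply, mem_colon_singleton]
    exact Iff.rfl
  (quotEquivOfEq _ _ hker).symm ≪≫ₗ f.quotKerEquivOfSurjective hf

theorem map_mkQ_colon_singleton (p p' : Submodule R M) (x : M) :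
    (p'.map p.mkQ).colon {p.mkQ x} = (p ⊔ p').colon {x} := by
  ext r
  rw [mem_colon_singleton, mem_colon_singleton, ← map_smul, ← mem_comap, comap_map_mkQ]

end Submodule

namespace Ideal

variable {R : Type*} [CommRing R]

theorem sup_span_singleton_mul_colon_singleton {A K : Ideal R} {l : R}
    (hl : ∀ s, l * s ∈ A → s ∈ A) : (A ⊔ span {l} * K).colon {l} = A ⊔ K := by
  ext s
  rw [Submodule.mem_colon_singleton, smul_eq_mul, mul_comm s l]
  constructor
  · intro h
    obtain ⟨y, hy, z, hz, hyz⟩ := Submodule.mem_sup.mp h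
    obtain ⟨k, hk, rfl⟩ := mem_span_singleton_mul.mp hz
    have hsk : s - k ∈ A := by
      refine hl _ ?_
      rw [mul_sub, ← hyz, add_sub_cancel_right]
      exact hy
    rw [← sub_add_cancel s k]
    exact add_mem (mem_sup_left hsk) (mem_sup_right hk)
  · intro h
    obtain ⟨y, hy, k, hk, rfl⟩ := Submodule.mem_sup.mp h
    rw [mul_add]
    exact add_mem (mem_sup_left (A.mul_mem_left l hy))
      (mem_sup_right (mem_span_singleton_mul.mpr ⟨k, hk, rfl⟩))

theorem span_pair_sup_span_pair_mul {a l f b c : R} (hf : f ∈ span {b, c}) :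
    span {a, l * f} ⊔ span {l * b, l * c} = span {a} ⊔ span {l} * span {b, c} := by
  have hlbc : span {l * b, l * c} = span {l} * span {b, c} := by
    rw [span_mul_span', Set.singleton_mul, Set.image_pair]
  have hlf : span {l * f} ≤ span {l} * span {b, c} :=
    span_singleton_le_iff_mem _ |>.mpr (mul_mem_mul (mem_span_singleton_self l) hf)
  rw [hlbc, span_insert, sup_assoc, sup_eq_right.mpr hlf]

end Ideal

/-- **Subquotient claim of Example 6.3.** Let `S` be a commutative ring,
`a, l, f ∈ S` with `l` a nonzerodivisor on `S/(a)`, and `b, c ∈ S` with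
`f ∈ (b, c)`.  Let `M = S/(a, l·f)`, let `J ⊆ M` be the submodule generated by
the class of `l`, and let `M₁ ⊆ J` be the submodule generated by the classes of
`l·b` and `l·c`.  Then `J/M₁ ≅ S/(a, b, c)` as `S`-modules; in particular
`S/(a, b, c)` is a subquotient of `S/(a, l·f)`. -/
theorem stmt9 (S : Type*) [CommRing S] (a l f b c : S)
    (hreg : ∀ s : S, l * s ∈ Ideal.span {a} → s ∈ Ideal.span {a})
    (hf : f ∈ Ideal.span {b, c})
    (I : Ideal S) (hI : I = Ideal.span {a, l * f})
    (J : Submodule S (S ⧸ I))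
    (hJ : J = Submodule.span S {Ideal.Quotient.mk I l})
    (M₁ : Submodule S (S ⧸ I))
    (hM₁ : M₁ = Submodule.span S {Ideal.Quotient.mk I (l * b), Ideal.Quotient.mk I (l * c)}) :
    Nonempty ((↥J ⧸ M₁.comap J.subtype) ≃ₗ[S] (S ⧸ Ideal.span {a, b, c})) := by
  have hM₁map : M₁ = Submodule.map I.mkQ (Ideal.span {l * b, l * c}) := by
    rw [hM₁, Ideal.span, Submodule.map_span, Set.image_pair]
    rfl
  have hcolon : M₁.colon {Ideal.Quotient.mk I l} = Ideal.span {a, b, c} := by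
    rw [hM₁map, show Ideal.Quotient.mk I l = I.mkQ l from rfl, Submodule.map_mkQ_colon_singleton,
      hI, Ideal.span_pair_sup_span_pair_mul hf,
      Ideal.sup_span_singleton_mul_colon_singleton hreg, ← Ideal.span_insert]
  subst hJ
  exact ⟨(M₁.quotColonEquivSpanSingletonQuot _).symm ≪≫ₗ Submodule.quotEquivOfEq _ _ hcolon⟩
end

section
/- The module M = I/(x,y)³ is annihilated by the ideal (x, y), hence is a module over k[z,w] ≅ S/(x,y), and as a k[z,w]-module it is free with basis the residue classes of x·q, y·q and x²·z^{a+b} (homogeneous of degrees a+3, a+3 and a+b+2 respectively); that is, every element of I is congruent modulo (x,y)³ to u·(x·q) + v·(y·q) + s·(x²·z^{a+b}) for uniquely determined u, v, s ∈ k[z,w]. -/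
/-!
Every generator of `I` lies in `(x,y)²`, so `(x,y)·I ⊆ (x,y)³`. Modulo `(x,y)³` the ideal `I` is
generated by `x q`, `y q`, `x² z^{a+b}`, and since `S = k[z,w] + (x,y)` while `(x,y)` kills these
three modulo `(x,y)³`, their coefficients may be taken in `k[z,w]`. For uniqueness, a
`k[z,w]`-combination of them is a binary quadratic form `x² A + x y B + y² C` with
`A, B, C ∈ k[z,w]`. Substituting `x = α t`, `y = β t` maps `(x,y)³` into `(t³)` and the form to
`t² (α² A + α β B + β² C)`, so if the form lies in `(x,y)³` then `α² A + α β B + β² C = 0` for all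
`α, β`, whence `A = B = C = 0`.
-/

open MvPolynomial

namespace TripleLine

variable {R : Type*} [CommRing R]

theorem exists_mem_supported_sub_mem_span_X {σ : Type*} (s : Set σ) (p : MvPolynomial σ R) :
    ∃ a ∈ supported R s, p - a ∈ Ideal.span (X '' sᶜ) := by
  induction p using MvPolynomial.induction_on with
  | C r => exact ⟨C r, Subalgebra.algebraMap_mem _ r, by simp⟩
  | add p q hp hq =>
    obtain ⟨a, ha, hpa⟩ := hp
    obtain ⟨b, hb, hqb⟩ := hq
    exact ⟨a + b, add_mem ha hb, by simpa [add_sub_add_comm] using add_mem hpa hqb⟩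
  | mul_X p i hp =>
    obtain ⟨a, ha, hpa⟩ := hp
    by_cases hi : i ∈ s
    · refine ⟨a * X i, mul_mem ha (Algebra.subset_adjoin ⟨i, hi, rfl⟩), ?_⟩
      simpa [sub_mul] using Ideal.mul_mem_right (X i) _ hpa
    · exact ⟨0, zero_mem _, by
        simpa using Ideal.mul_mem_left _ p (Ideal.subset_span (Set.mem_image_of_mem X hi))⟩

theorem exists_sum_sub_mem_of_mem_sup {A : Set R} {J K : Ideal R}
    (hA : ∀ c, ∃ a ∈ A, c - a ∈ J) {ι : Type*} [Fintype ι] {f : ι → R}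
    (hf : ∀ i, ∀ r ∈ J, r * f i ∈ K) {p : R} (hp : p ∈ K ⊔ Ideal.span (Set.range f)) :
    ∃ c : ι → R, (∀ i, c i ∈ A) ∧ p - ∑ i, c i * f i ∈ K := by
  obtain ⟨k, hk, g, hg, rfl⟩ := Submodule.mem_sup.1 hp
  obtain ⟨c, rfl⟩ := (Ideal.mem_span_range_iff_exists_fun).1 hg
  choose a haA hca using hA
  refine ⟨fun i => a (c i), fun i => haA _, ?_⟩
  rw [add_sub_assoc, ← Finset.sum_sub_distrib]
  refine add_mem hk (sum_mem fun i _ => ?_)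
  rw [← sub_mul]
  exact hf i _ (hca _)

noncomputable def substLine (α β : MvPolynomial (Fin 4) R) :
    MvPolynomial (Fin 4) R →ₐ[R] Polynomial (MvPolynomial (Fin 4) R) :=
  aeval ![Polynomial.C α * Polynomial.X, Polynomial.C β * Polynomial.X,
    Polynomial.C (X 2), Polynomial.C (X 3)]

theorem substLine_of_mem_supported (α β : MvPolynomial (Fin 4) R) {u : MvPolynomial (Fin 4) R}
    (hu : u ∈ supported R ({2, 3} : Set (Fin 4))) : substLine α β u = Polynomial.C u := by
  refine AlgHom.adjoin_le_equalizer (substLine α β) (Polynomial.CAlgHom) ?_ hu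
  rintro _ ⟨_, rfl | rfl, rfl⟩ <;> simp [substLine]

theorem map_substLine_span_le (α β : MvPolynomial (Fin 4) R) :
    (Ideal.span {X 0, X 1}).map (substLine α β) ≤ Ideal.span {Polynomial.X} := by
  rw [Ideal.map_span, Ideal.span_le]
  rintro _ ⟨_, rfl | rfl, rfl⟩ <;> simp [substLine, Ideal.mem_span_singleton]

theorem eq_zero_of_quadratic_mem_span_pow_three {A B C : MvPolynomial (Fin 4) R}
    (hA : A ∈ supported R ({2, 3} : Set (Fin 4))) (hB : B ∈ supported R ({2, 3} : Set (Fin 4)))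
    (hC : C ∈ supported R ({2, 3} : Set (Fin 4)))
    (h : X 0 ^ 2 * A + X 0 * X 1 * B + X 1 ^ 2 * C ∈ Ideal.span {X 0, X 1} ^ 3) :
    A = 0 ∧ B = 0 ∧ C = 0 := by
  have key (α β : MvPolynomial (Fin 4) R) : α ^ 2 * A + α * β * B + β ^ 2 * C = 0 := by
    have hmem := Ideal.pow_right_mono (map_substLine_span_le α β) 3
      (Ideal.map_pow (substLine α β) _ 3 ▸ Ideal.mem_map_of_mem (substLine α β) h)
    have hsubst : substLine α β (X 0 ^ 2 * A + X 0 * X 1 * B + X 1 ^ 2 * C) =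
        Polynomial.X ^ 2 * Polynomial.C (α ^ 2 * A + α * β * B + β ^ 2 * C) := by
      simp only [map_add, map_mul, map_pow, substLine_of_mem_supported α β hA,
        substLine_of_mem_supported α β hB, substLine_of_mem_supported α β hC]
      simp only [substLine, aeval_X, Matrix.cons_val_zero, Matrix.cons_val_one]
      ring
    rw [hsubst, Ideal.span_singleton_pow, Ideal.mem_span_singleton,
      Polynomial.X_pow_dvd_iff] at hmem
    simpa only [Polynomial.coeff_X_pow_mul', le_refl, if_true, Nat.sub_self,
      Polynomial.coeff_C_zero] using hmem 2 (by norm_num)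
  have hA0 : A = 0 := by simpa using key 1 0
  have hC0 : C = 0 := by simpa using key 0 1
  refine ⟨hA0, by simpa [hA0, hC0] using key 1 1, hC0⟩

theorem X_zero_pow_mul_X_one_pow_mem (i j : ℕ) :
    (X 0 ^ i * X 1 ^ j : MvPolynomial (Fin 4) R) ∈ Ideal.span {X 0, X 1} ^ (i + j) :=
  pow_add (Ideal.span {X 0, X 1} : Ideal (MvPolynomial (Fin 4) R)) i j ▸ Ideal.mul_mem_mul
    (Ideal.pow_mem_pow (Ideal.subset_span (by simp)) i)
    (Ideal.pow_mem_pow (Ideal.subset_span (by simp)) j)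

theorem exists_mem_supported_sub_mem_span_X_zero_X_one (p : MvPolynomial (Fin 4) R) :
    ∃ a ∈ supported R ({2, 3} : Set (Fin 4)), p - a ∈ Ideal.span {X 0, X 1} := by
  have hcompl : ({2, 3} : Set (Fin 4))ᶜ = {0, 1} := by
    ext i; fin_cases i <;> simp
  simpa [hcompl, Set.image_pair] using exists_mem_supported_sub_mem_span_X {2, 3} p

variable (a b : ℕ)

theorem basis_mem_span_pow_two (i : Fin 3) :
    ![X 0 * (X 0 * X 3 ^ (a + 1) - X 1 * X 2 ^ (a + 1)),
      X 1 * (X 0 * X 3 ^ (a + 1) - X 1 * X 2 ^ (a + 1)), X 0 ^ 2 * X 2 ^ (a + b)] i ∈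
      (Ideal.span {X 0, X 1} : Ideal (MvPolynomial (Fin 4) R)) ^ 2 := by
  have hq : (X 0 * X 3 ^ (a + 1) - X 1 * X 2 ^ (a + 1) : MvPolynomial (Fin 4) R) ∈
      Ideal.span {X 0, X 1} := by
    refine sub_mem (Ideal.mul_mem_right _ _ (Ideal.subset_span ?_))
      (Ideal.mul_mem_right _ _ (Ideal.subset_span ?_)) <;> simp
  fin_cases i
  · simpa [sq] using Ideal.mul_mem_mul (Ideal.subset_span (by simp)) hq
  · simpa [sq] using Ideal.mul_mem_mul (Ideal.subset_span (by simp)) hq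
  · simpa using Ideal.mul_mem_right (X 2 ^ (a + b)) _ (X_zero_pow_mul_X_one_pow_mem 2 0)

theorem span_le_span_pow_three_sup :
    Ideal.span {X 0 ^ 3, X 0 ^ 2 * X 1, X 0 * X 1 ^ 2, X 1 ^ 3,
      X 0 * (X 0 * X 3 ^ (a + 1) - X 1 * X 2 ^ (a + 1)),
      X 1 * (X 0 * X 3 ^ (a + 1) - X 1 * X 2 ^ (a + 1)), X 0 ^ 2 * X 2 ^ (a + b)} ≤
      (Ideal.span {X 0, X 1} : Ideal (MvPolynomial (Fin 4) R)) ^ 3 ⊔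
        Ideal.span (Set.range ![X 0 * (X 0 * X 3 ^ (a + 1) - X 1 * X 2 ^ (a + 1)),
          X 1 * (X 0 * X 3 ^ (a + 1) - X 1 * X 2 ^ (a + 1)), X 0 ^ 2 * X 2 ^ (a + b)]) := by
  rw [Ideal.span_le]
  rintro g (rfl | rfl | rfl | rfl | rfl | rfl | rfl)
  · exact Ideal.mem_sup_left (by simpa using X_zero_pow_mul_X_one_pow_mem (R := R) 3 0)
  · exact Ideal.mem_sup_left (by simpa using X_zero_pow_mul_X_one_pow_mem (R := R) 2 1)
  · exact Ideal.mem_sup_left (by simpa using X_zero_pow_mul_X_one_pow_mem (R := R) 1 2)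
  · exact Ideal.mem_sup_left (by simpa using X_zero_pow_mul_X_one_pow_mem (R := R) 0 3)
  · exact Ideal.mem_sup_right (Ideal.subset_span ⟨0, rfl⟩)
  · exact Ideal.mem_sup_right (Ideal.subset_span ⟨1, rfl⟩)
  · exact Ideal.mem_sup_right (Ideal.subset_span ⟨2, rfl⟩)

theorem eq_zero_of_combination_mem_span_pow_three [IsDomain R] {u v s : MvPolynomial (Fin 4) R}
    (hu : u ∈ supported R ({2, 3} : Set (Fin 4))) (hv : v ∈ supported R ({2, 3} : Set (Fin 4)))
    (hs : s ∈ supported R ({2, 3} : Set (Fin 4)))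
    (h : u * (X 0 * (X 0 * X 3 ^ (a + 1) - X 1 * X 2 ^ (a + 1))) +
      v * (X 1 * (X 0 * X 3 ^ (a + 1) - X 1 * X 2 ^ (a + 1))) +
      s * (X 0 ^ 2 * X 2 ^ (a + b)) ∈ Ideal.span {X 0, X 1} ^ 3) :
    u = 0 ∧ v = 0 ∧ s = 0 := by
  have hz : (X 2 : MvPolynomial (Fin 4) R) ∈ supported R ({2, 3} : Set (Fin 4)) :=
    Algebra.subset_adjoin ⟨2, by simp, rfl⟩
  have hw : (X 3 : MvPolynomial (Fin 4) R) ∈ supported R ({2, 3} : Set (Fin 4)) :=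
    Algebra.subset_adjoin ⟨3, by simp, rfl⟩
  have hquad : u * (X 0 * (X 0 * X 3 ^ (a + 1) - X 1 * X 2 ^ (a + 1))) +
      v * (X 1 * (X 0 * X 3 ^ (a + 1) - X 1 * X 2 ^ (a + 1))) + s * (X 0 ^ 2 * X 2 ^ (a + b)) =
      X 0 ^ 2 * (X 3 ^ (a + 1) * u + X 2 ^ (a + b) * s) +
        X 0 * X 1 * (X 3 ^ (a + 1) * v - X 2 ^ (a + 1) * u) + X 1 ^ 2 * -(X 2 ^ (a + 1) * v) := by
    ring
  rw [hquad] at h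
  obtain ⟨hA, hB, hC⟩ := eq_zero_of_quadratic_mem_span_pow_three
    (add_mem (mul_mem (pow_mem hw _) hu) (mul_mem (pow_mem hz _) hs))
    (sub_mem (mul_mem (pow_mem hw _) hv) (mul_mem (pow_mem hz _) hu))
    (neg_mem (mul_mem (pow_mem hz _) hv)) h
  have hv0 : v = 0 := by simpa [X_ne_zero] using hC
  have hu0 : u = 0 := by simpa [hv0, X_ne_zero] using hB
  exact ⟨hu0, hv0, by simpa [hu0, X_ne_zero] using hA⟩

end TripleLine

open TripleLine

/-- **Module structure of `I_{W₀}/I_{L₀}³` (proof of Proposition 2.3).** Let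
`S = k[x,y,z,w]`, `a, b ≥ 0`, `q = x·w^{a+1} − y·z^{a+1}`, and
`I = (x³, x²y, xy², y³, x·q, y·q, x²·z^{a+b})`, the ideal of the special fibre
`W₀`.  Then `M = I/(x,y)³` is annihilated by `(x, y)` — i.e. `x·I` and `y·I`
lie in `(x,y)³` — and, as a module over `k[z,w] ≅ S/(x,y)`, it is free with
basis the residue classes of `x·q`, `y·q` and `x²·z^{a+b}`: every element of
`I` is congruent modulo `(x,y)³` to `u·(x·q) + v·(y·q) + s·(x²·z^{a+b})` for
uniquely determined `u, v, s ∈ k[z,w]`. -/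
theorem stmt12 (k : Type*) [Field k] (a b : ℕ)
    (x y z w : MvPolynomial (Fin 4) k)
    (hx : x = X 0) (hy : y = X 1) (hz : z = X 2) (hw : w = X 3)
    (q : MvPolynomial (Fin 4) k)
    (hq : q = x * w ^ (a + 1) - y * z ^ (a + 1))
    (I : Ideal (MvPolynomial (Fin 4) k))
    (hI : I = Ideal.span {x ^ 3, x ^ 2 * y, x * y ^ 2, y ^ 3,
      x * q, y * q, x ^ 2 * z ^ (a + b)})
    (K : Ideal (MvPolynomial (Fin 4) k))
    (hK : K = Ideal.span {x, y} ^ 3) :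
    (∀ p ∈ I, x * p ∈ K ∧ y * p ∈ K) ∧
    (∀ p ∈ I, ∃! uvs : MvPolynomial (Fin 4) k × MvPolynomial (Fin 4) k ×
        MvPolynomial (Fin 4) k,
      uvs.1 ∈ supported k ({2, 3} : Set (Fin 4)) ∧
      uvs.2.1 ∈ supported k ({2, 3} : Set (Fin 4)) ∧
      uvs.2.2 ∈ supported k ({2, 3} : Set (Fin 4)) ∧
      p - (uvs.1 * (x * q) + uvs.2.1 * (y * q) +
        uvs.2.2 * (x ^ 2 * z ^ (a + b))) ∈ K) := by
  subst hx hy hz hw hq hI hK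
  set J : Ideal (MvPolynomial (Fin 4) k) := Ideal.span {X 0, X 1}
  have hmul {r p} (hr : r ∈ J) (hp : p ∈ J ^ 2) : r * p ∈ J ^ 3 :=
    pow_succ' J 2 ▸ Ideal.mul_mem_mul hr hp
  have hI2 := (span_le_span_pow_three_sup (R := k) a b).trans <|
    sup_le (Ideal.pow_le_pow_right (by norm_num))
      (Ideal.span_le.2 (Set.range_subset_iff.2 (basis_mem_span_pow_two a b)))
  refine ⟨fun p hp => ⟨hmul (Ideal.subset_span (by simp)) (hI2 hp),
    hmul (Ideal.subset_span (by simp)) (hI2 hp)⟩, fun p hp => ?_⟩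
  obtain ⟨c, hc, hpc⟩ := exists_sum_sub_mem_of_mem_sup
    exists_mem_supported_sub_mem_span_X_zero_X_one
    (fun i _ hr => hmul hr (basis_mem_span_pow_two a b i)) (span_le_span_pow_three_sup a b hp)
  simp only [Fin.sum_univ_three, Matrix.cons_val_zero, Matrix.cons_val_one,
    Matrix.cons_val] at hpc
  refine ⟨(c 0, c 1, c 2), ⟨hc 0, hc 1, hc 2, hpc⟩, ?_⟩
  rintro ⟨u, v, s⟩ ⟨hu, hv, hs, hpuvs⟩
  obtain ⟨hu', hv', hs'⟩ := eq_zero_of_combination_mem_span_pow_three a b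
    (sub_mem hu (hc 0)) (sub_mem hv (hc 1)) (sub_mem hs (hc 2))
    (by convert sub_mem hpc hpuvs using 1; ring)
  simp only [sub_eq_zero] at hu' hv' hs'
  simp [hu', hv', hs']
end
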